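/- Let v ∈ ℝⁿ with vᵢ > 1/√2 for all i, p_v = (v − v³)/(2v² − e) componentwise, δ = ‖p_v‖/2, d_x + d_s = p_v, q_v = d_x − d_s, ω = (‖d_x‖² + ‖d_s‖²)/2, and θ ∈ (0,1). Define v₊² = (v² + v·p_v + p_v²/4 − q_v²/4)/(1−θ) componentwise. If δ² + ω < (1−θ)/2, then min_i (v₊)ᵢ ≥ √((1 − δ² − ω)/(1−θ)) > 1/√2. -/

import Mathlib

/-!
Coordinatewise, `v² + v p_v = 1 + (v² - 1)² / (2v² - 1) ≥ 1` because `2v² > 1`, and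
`p_v²/4 - q_v²/4 = d_x d_s ≥ -(d_x² + d_s²)/2 ≥ -ω`. Hence every radicand defining `v₊²` is at
least `(1 - ω)/(1 - θ) ≥ (1 - δ² - ω)/(1 - θ)`, and `δ² + ω < (1 - θ)/2` pushes this bound above
`1/2`.
-/

open Finset

lemma half_lt_sq_of_inv_sqrt_two_lt {v : ℝ} (hv : 1 / Real.sqrt 2 < v) : 1 / 2 < v ^ 2 := by
  have h : (1 / Real.sqrt 2) ^ 2 = 1 / 2 := by
    rw [div_pow, Real.sq_sqrt zero_le_two, one_pow]
  rw [← h]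
  exact pow_lt_pow_left₀ hv (by positivity) two_ne_zero

lemma sq_add_mul_newton_step {v : ℝ} (hv : 2 * v ^ 2 - 1 ≠ 0) :
    v ^ 2 + v * ((v - v ^ 3) / (2 * v ^ 2 - 1)) = 1 + (v ^ 2 - 1) ^ 2 / (2 * v ^ 2 - 1) := by
  rw [mul_div_assoc', add_div' _ _ _ hv, add_div' _ _ _ hv]
  ring

lemma one_le_sq_add_mul_newton_step {v : ℝ} (hv : 1 / 2 < v ^ 2) :
    1 ≤ v ^ 2 + v * ((v - v ^ 3) / (2 * v ^ 2 - 1)) := by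
  have hden : 0 < 2 * v ^ 2 - 1 := by linarith
  rw [sq_add_mul_newton_step hden.ne']
  have : 0 ≤ (v ^ 2 - 1) ^ 2 / (2 * v ^ 2 - 1) := by positivity
  linarith

lemma neg_le_sq_add_div_four_sub_sq_sub_div_four {a b ω : ℝ} (hω : (a ^ 2 + b ^ 2) / 2 ≤ ω) :
    -ω ≤ (a + b) ^ 2 / 4 - (a - b) ^ 2 / 4 := by
  nlinarith [sq_nonneg (a + b)]

lemma half_sq_add_sq_le_half_sum_add_sum {ι : Type*} [Fintype ι] (f g : ι → ℝ) (i : ι) :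
    (f i ^ 2 + g i ^ 2) / 2 ≤ ((∑ j, f j ^ 2) + ∑ j, g j ^ 2) / 2 := by
  have hf : f i ^ 2 ≤ ∑ j, f j ^ 2 :=
    single_le_sum (fun j _ => sq_nonneg (f j)) (mem_univ i)
  have hg : g i ^ 2 ≤ ∑ j, g j ^ 2 :=
    single_le_sum (fun j _ => sq_nonneg (g j)) (mem_univ i)
  linarith

lemma inv_sqrt_two_lt_sqrt_one_sub_div {s θ : ℝ} (hθ : θ ∈ Set.Ioo (0 : ℝ) 1)
    (hs : s < (1 - θ) / 2) : 1 / Real.sqrt 2 < Real.sqrt ((1 - s) / (1 - θ)) := by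
  obtain ⟨hθ0, hθ1⟩ := hθ
  have hhalf : (1 : ℝ) / 2 < (1 - s) / (1 - θ) := by
    rw [lt_div_iff₀ (by linarith)]
    linarith
  rw [one_div, ← Real.sqrt_inv, ← one_div]
  exact Real.sqrt_lt_sqrt (by norm_num) hhalf

theorem stmt7_general (n : ℕ) (v dx ds : Fin n → ℝ)
    (hv : ∀ i, v i > 1 / Real.sqrt 2)
    (pv : Fin n → ℝ) (hpv : ∀ i, pv i = (v i - (v i) ^ 3) / (2 * (v i) ^ 2 - 1))
    (hds : dx + ds = pv)
    (qv : Fin n → ℝ) (hqv : qv = dx - ds)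
    (δ ω θ : ℝ)
    (hω : ω = ((∑ i, (dx i) ^ 2) + ∑ i, (ds i) ^ 2) / 2)
    (hθ : θ ∈ Set.Ioo (0 : ℝ) 1)
    (vplus : Fin n → ℝ)
    (hvp : ∀ i, vplus i =
      Real.sqrt (((v i) ^ 2 + v i * pv i + (pv i) ^ 2 / 4 - (qv i) ^ 2 / 4) / (1 - θ)))
    (h : δ ^ 2 + ω < (1 - θ) / 2) :
    (∀ i, vplus i ≥ Real.sqrt ((1 - δ ^ 2 - ω) / (1 - θ))) ∧
    Real.sqrt ((1 - δ ^ 2 - ω) / (1 - θ)) > 1 / Real.sqrt 2 := by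
  refine ⟨fun i => ?_, by simpa [sub_sub] using inv_sqrt_two_lt_sqrt_one_sub_div hθ h⟩
  have hstep : 1 ≤ v i ^ 2 + v i * pv i := by
    rw [hpv i]
    exact one_le_sq_add_mul_newton_step (half_lt_sq_of_inv_sqrt_two_lt (hv i))
  have hcross : -ω ≤ pv i ^ 2 / 4 - qv i ^ 2 / 4 := by
    rw [← hds, hqv, Pi.add_apply, Pi.sub_apply]
    exact neg_le_sq_add_div_four_sub_sq_sub_div_four
      (hω ▸ half_sq_add_sq_le_half_sum_add_sum dx ds i)
  rw [hvp i]
  refine Real.sqrt_le_sqrt (div_le_div_of_nonneg_right ?_ (by linarith [hθ.2]))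
  linarith [sq_nonneg δ]

theorem stmt7 (n : ℕ) (v dx ds : Fin n → ℝ)
    (hv : ∀ i, v i > 1 / Real.sqrt 2)
    (pv : Fin n → ℝ) (hpv : ∀ i, pv i = (v i - (v i) ^ 3) / (2 * (v i) ^ 2 - 1))
    (hds : dx + ds = pv)
    (qv : Fin n → ℝ) (hqv : qv = dx - ds)
    (δ ω θ : ℝ) (hδ : δ = Real.sqrt (∑ i, (pv i) ^ 2) / 2)
    (hω : ω = ((∑ i, (dx i) ^ 2) + ∑ i, (ds i) ^ 2) / 2)
    (hθ : θ ∈ Set.Ioo (0 : ℝ) 1)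
    (vplus : Fin n → ℝ)
    (hvp : ∀ i, vplus i =
      Real.sqrt (((v i) ^ 2 + v i * pv i + (pv i) ^ 2 / 4 - (qv i) ^ 2 / 4) / (1 - θ)))
    (h : δ ^ 2 + ω < (1 - θ) / 2) :
    (∀ i, vplus i ≥ Real.sqrt ((1 - δ ^ 2 - ω) / (1 - θ))) ∧
    Real.sqrt ((1 - δ ^ 2 - ω) / (1 - θ)) > 1 / Real.sqrt 2 :=
  stmt7_general n v dx ds hv pv hpv hds qv hqv δ ω θ hω hθ vplus hvp h
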